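/- Assume S ≥ 2 and L > 0 are such that |Φ_n(x)| ≤ L / max(1, (n|x|)^S) for all x ∈ 𝕋 and n ≥ 1. Set m = min_{1≤k≤K} |A_k|, η = min_{k≠ℓ} |λ_k − λ_ℓ|, and C = max(1, (16ML/m)^{1/S}). Let n be an integer with n ≥ 4C/η, and assume max_{y∈𝕋} |E_n(y)| ≤ m/16. Define 𝔾 = {x ∈ 𝕋 : |σ_n(x)| ≥ m/2} and 𝔾_ℓ = {x ∈ 𝔾 : |x − λ_ℓ| < C/n} for ℓ = 1,…,K. Then every x ∈ 𝔾 satisfies |x − λ_ℓ| < C/n for exactly one ℓ ∈ {1,…,K}; consequently 𝔾 is the disjoint union of the sets 𝔾_1, …, 𝔾_K. -/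

import Mathlib

open MeasureTheory ProbabilityTheory

noncomputable section

/-- A low pass filter: an infinitely differentiable even function `H : ℝ → [0,1]`
with `H(t) = 1` for `|t| ≤ 1/2` and `H(t) = 0` for `|t| ≥ 1`. -/
structure LowPassFilter where
  toFun : ℝ → ℝ
  contDiff : ContDiff ℝ (⊤ : ℕ∞) toFun
  mem_Icc : ∀ t : ℝ, toFun t ∈ Set.Icc (0 : ℝ) 1
  even : ∀ t : ℝ, toFun (-t) = toFun t
  eq_one : ∀ t : ℝ, |t| ≤ 1 / 2 → toFun t = 1
  eq_zero : ∀ t : ℝ, 1 ≤ |t| → toFun t = 0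

/-- The integers `ℓ` with `|ℓ| < n`. -/
def lrange (n : ℕ) : Finset ℤ := Finset.Ioo (-(n : ℤ)) (n : ℤ)

/-- The normalizing constant `ħ_n = (Σ_{|ℓ|<n} H(|ℓ|/n))⁻¹`. -/
def hbar (F : LowPassFilter) (n : ℕ) : ℝ :=
  (∑ ℓ ∈ lrange n, F.toFun (|(ℓ : ℝ)| / n))⁻¹

/-- The localized kernel `Φ_n(x) = ħ_n Σ_{|ℓ|<n} H(|ℓ|/n) e^{iℓx}`, as a function on `ℝ`
(it is `2π`-periodic, hence a function on `𝕋 = ℝ/2πℤ`). -/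
def Phi (F : LowPassFilter) (n : ℕ) (x : ℝ) : ℂ :=
  (hbar F n : ℂ) *
    ∑ ℓ ∈ lrange n, (F.toFun (|(ℓ : ℝ)| / n) : ℂ) * Complex.exp (Complex.I * ℓ * x)

/-- The distance from `x` to `0` modulo `2π`, i.e. the norm of `x` in `𝕋 = ℝ/2πℤ`. -/
def tnorm (x : ℝ) : ℝ := ‖(x : AddCircle (2 * Real.pi))‖

/-- A real-valued random variable `X` is mean-zero sub-Gaussian with parameter `V`
(`X ∈ G(V)`) if `E[X] = 0` and `log E[exp(tX)] ≤ t²V²/2` for all real `t`. -/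
def SubGaussianRe {Ω : Type*} [MeasurableSpace Ω] (μ : Measure Ω) (X : Ω → ℝ) (V : ℝ) : Prop :=
  (∫ ω, X ω ∂μ) = 0 ∧
    ∀ t : ℝ, Integrable (fun ω => Real.exp (t * X ω)) μ ∧
      Real.log (∫ ω, Real.exp (t * X ω) ∂μ) ≤ t ^ 2 * V ^ 2 / 2

/-- A complex-valued random variable is in `G(V)` if both its real and imaginary parts are
mean-zero sub-Gaussian with parameter `V`. -/
def SubGaussianC {Ω : Type*} [MeasurableSpace Ω] (μ : Measure Ω) (X : Ω → ℂ) (V : ℝ) : Prop :=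
  SubGaussianRe μ (fun ω => (X ω).re) V ∧ SubGaussianRe μ (fun ω => (X ω).im) V

/-- The exact samples `μ̂(ℓ) = Σ_k A_k e^{-iℓλ_k}`. -/
def muhat {K : ℕ} (A : Fin K → ℂ) (lam : Fin K → ℝ) (ℓ : ℤ) : ℂ :=
  ∑ k, A k * Complex.exp (-(Complex.I * ℓ * lam k))

/-- The noise term `E_n(x) = ħ_n Σ_{|ℓ|<n} H(|ℓ|/n) ε_ℓ e^{iℓx}`. -/
def En (F : LowPassFilter) (n : ℕ) (eps : ℤ → ℂ) (x : ℝ) : ℂ :=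
  (hbar F n : ℂ) *
    ∑ ℓ ∈ lrange n, (F.toFun (|(ℓ : ℝ)| / n) : ℂ) * eps ℓ * Complex.exp (Complex.I * ℓ * x)

/-- The reconstruction `σ_n(x) = ħ_n Σ_{|ℓ|<n} H(|ℓ|/n) (μ̂(ℓ) + ε_ℓ) e^{iℓx}`. -/
def sigman (F : LowPassFilter) (n : ℕ) {K : ℕ} (A : Fin K → ℂ) (lam : Fin K → ℝ)
    (eps : ℤ → ℂ) (x : ℝ) : ℂ :=
  (hbar F n : ℂ) *
    ∑ ℓ ∈ lrange n, (F.toFun (|(ℓ : ℝ)| / n) : ℂ) * (muhat A lam ℓ + eps ℓ) *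
      Complex.exp (Complex.I * ℓ * x)


/-- The thresholded set `𝔾 = {x : |σ_n(x)| ≥ m/2}` (as a set of real representatives). -/
def Gset (F : LowPassFilter) (n : ℕ) {K : ℕ} (A : Fin K → ℂ) (lam : Fin K → ℝ) (eps : ℤ → ℂ)
    (m : ℝ) : Set ℝ :=
  {x : ℝ | m / 2 ≤ ‖sigman F n A lam eps x‖}

/-- The cluster `𝔾_ℓ = {x ∈ 𝔾 : |x - λ_ℓ| < C/n}` (distance measured modulo `2π`). -/
def Glset (F : LowPassFilter) (n : ℕ) {K : ℕ} (A : Fin K → ℂ) (lam : Fin K → ℝ) (eps : ℤ → ℂ)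
    (m C : ℝ) (l : Fin K) : Set ℝ :=
  {x ∈ Gset F n A lam eps m | tnorm (x - lam l) < C / n}


lemma tnorm_nonneg' (x : ℝ) : 0 ≤ tnorm x := norm_nonneg _

lemma tnorm_comm' (a b : ℝ) : tnorm (a - b) = tnorm (b - a) := by
  unfold tnorm
  rw [show a - b = -(b - a) by ring, AddCircle.coe_neg, norm_neg]

lemma tnorm_tri' (a b x : ℝ) : tnorm (a - b) ≤ tnorm (a - x) + tnorm (b - x) := by
  unfold tnorm
  rw [show a - b = (a - x) - (b - x) by ring, AddCircle.coe_sub]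
  exact norm_sub_le _ _

lemma sigman_eq (F : LowPassFilter) (n : ℕ) {K : ℕ} (A : Fin K → ℂ) (lam : Fin K → ℝ)
    (eps : ℤ → ℂ) (x : ℝ) :
    sigman F n A lam eps x = (∑ k, A k * Phi F n (x - lam k)) + En F n eps x := by
  unfold sigman Phi En muhat
  have key : ∀ (ℓ : ℤ) (k : Fin K),
      Complex.exp (-(Complex.I * ℓ * lam k)) * Complex.exp (Complex.I * ℓ * x)
        = Complex.exp (Complex.I * ℓ * (x - lam k)) := by
    intro ℓ k
    rw [← Complex.exp_add]
    congr 1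
    push_cast
    ring
  have h1 : ∀ ℓ ∈ lrange n,
      (F.toFun (|(ℓ : ℝ)| / n) : ℂ) *
          ((∑ k, A k * Complex.exp (-(Complex.I * ℓ * lam k))) + eps ℓ) *
        Complex.exp (Complex.I * ℓ * x)
      = (∑ k, A k * ((F.toFun (|(ℓ : ℝ)| / n) : ℂ) * Complex.exp (Complex.I * ℓ * (x - lam k))))
        + (F.toFun (|(ℓ : ℝ)| / n) : ℂ) * eps ℓ * Complex.exp (Complex.I * ℓ * x) := by
    intro ℓ _
    rw [mul_add, add_mul]
    congr 1
    rw [Finset.mul_sum, Finset.sum_mul]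
    refine Finset.sum_congr rfl fun k _ => ?_
    rw [← key ℓ k]
    ring
  rw [Finset.sum_congr rfl h1, Finset.sum_add_distrib, mul_add]
  congr 1
  rw [Finset.sum_comm, Finset.mul_sum]
  refine Finset.sum_congr rfl fun k _ => ?_
  rw [Finset.mul_sum, Finset.mul_sum, Finset.mul_sum]
  refine Finset.sum_congr rfl fun ℓ _ => ?_
  push_cast
  ring

/-- Every `x ∈ 𝔾` is within `C/n` of exactly one `λ_ℓ`; consequently `𝔾` is the disjoint
union of the clusters `𝔾_1, …, 𝔾_K`. -/
theorem G_disjoint_union (F : LowPassFilter) (S L : ℝ) (hS : 2 ≤ S) (hL : 0 < L)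
    (hloc : ∀ ν : ℕ, 1 ≤ ν → ∀ y : ℝ,
      ‖Phi F ν y‖ ≤ L / max 1 (((ν : ℝ) * tnorm y) ^ S))
    (K : ℕ) (hK : 1 ≤ K) (lam : Fin K → ℝ) (A : Fin K → ℂ)
    (hsep : ∀ k l : Fin K, k ≠ l → tnorm (lam k - lam l) ≠ 0) (hA : ∀ k, A k ≠ 0)
    (M : ℝ) (hM : M = ∑ k, ‖A k‖)
    (m : ℝ) (hm : m = ⨅ k : Fin K, ‖A k‖)
    (η : ℝ) (hη : η = ⨅ p : { p : Fin K × Fin K // p.1 ≠ p.2 }, tnorm (lam p.1.1 - lam p.1.2))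
    (C : ℝ) (hC : C = max 1 ((16 * M * L / m) ^ (1 / S)))
    (n : ℕ) (hn : 1 ≤ n) (hn4 : 4 * C / η ≤ (n : ℝ)) (eps : ℤ → ℂ)
    (hE : ∀ y : ℝ, ‖En F n eps y‖ ≤ m / 16) :
    (∀ x : ℝ, x ∈ Gset F n A lam eps m → ∃! l : Fin K, tnorm (x - lam l) < C / n) ∧
    (Gset F n A lam eps m = ⋃ l : Fin K, Glset F n A lam eps m C l) ∧
    (Pairwise fun l k : Fin K =>
      Disjoint (Glset F n A lam eps m C l) (Glset F n A lam eps m C k)) := by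
  have hS0 : (0:ℝ) < S := by linarith
  have hn0 : (0:ℝ) < n := by exact_mod_cast hn
  haveI : Nonempty (Fin K) := ⟨⟨0, hK⟩⟩
  have hm0 : 0 < m := by
    obtain ⟨k0, hk0⟩ := Finite.exists_min fun k : Fin K => ‖A k‖
    have h0 : 0 < ‖A k0‖ := norm_pos_iff.mpr (hA k0)
    rw [hm]; exact lt_of_lt_of_le h0 (le_ciInf hk0)
  have hmle : ∀ k, m ≤ ‖A k‖ := by
    intro k; rw [hm]
    exact ciInf_le (Set.Finite.bddBelow (Set.finite_range _)) k
  have hM0 : 0 < M := by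
    have hmM : m ≤ M := by
      rw [hM]
      calc m ≤ ‖A ⟨0, hK⟩‖ := hmle _
        _ ≤ ∑ k, ‖A k‖ :=
            Finset.single_le_sum (f := fun k : Fin K => ‖A k‖)
              (fun k _ => norm_nonneg _) (Finset.mem_univ _)
    linarith
  have hC1 : (1:ℝ) ≤ C := hC ▸ le_max_left _ _
  have hC0 : (0:ℝ) < C := lt_of_lt_of_le one_pos hC1
  have hCS : 16 * M * L / m ≤ C ^ S := by
    have hq : (0:ℝ) ≤ 16 * M * L / m := by positivity
    have h2 : (16 * M * L / m) ^ (1/S) ≤ C := hC ▸ le_max_right _ _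
    calc 16 * M * L / m = ((16 * M * L / m) ^ (1/S)) ^ S := by
          rw [← Real.rpow_mul hq, one_div, inv_mul_cancel₀ (ne_of_gt hS0), Real.rpow_one]
      _ ≤ C ^ S := Real.rpow_le_rpow (Real.rpow_nonneg hq _) h2 hS0.le
  have hCS0 : (0:ℝ) < C ^ S := Real.rpow_pos_of_pos hC0 S
  have hex : ∀ x ∈ Gset F n A lam eps m, ∃ l : Fin K, tnorm (x - lam l) < C / n := by
    intro x hx
    by_contra hcon
    push_neg at hcon
    have hphi : ∀ k : Fin K, ‖Phi F n (x - lam k)‖ ≤ L / C ^ S := by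
      intro k
      refine le_trans (hloc n hn (x - lam k)) ?_
      have h3 : C ≤ (n:ℝ) * tnorm (x - lam k) := by
        have := hcon k
        rw [div_le_iff₀ hn0] at this
        linarith [this]
      have h5 : C ^ S ≤ max 1 (((n:ℝ) * tnorm (x - lam k)) ^ S) :=
        le_trans (Real.rpow_le_rpow hC0.le h3 hS0.le) (le_max_right _ _)
      exact div_le_div_of_nonneg_left hL.le hCS0 h5
    have hsum : ‖∑ k, A k * Phi F n (x - lam k)‖ ≤ m / 16 := by
      calc ‖∑ k, A k * Phi F n (x - lam k)‖
          ≤ ∑ k, ‖A k * Phi F n (x - lam k)‖ := norm_sum_le _ _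
        _ = ∑ k, ‖A k‖ * ‖Phi F n (x - lam k)‖ := by
            simp [map_mul]
        _ ≤ ∑ k, ‖A k‖ * (L / C ^ S) := by
            refine Finset.sum_le_sum fun k _ => ?_
            exact mul_le_mul_of_nonneg_left (hphi k) (norm_nonneg _)
        _ = M * (L / C ^ S) := by rw [hM, Finset.sum_mul]
        _ ≤ m / 16 := by
            rw [← mul_div_assoc, div_le_div_iff₀ hCS0 (by norm_num : (0:ℝ) < 16)]
            have h6 : 16 * M * L ≤ C ^ S * m := by
              rw [div_le_iff₀ hm0] at hCS
              linarith
            linarith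
    have hbound : ‖sigman F n A lam eps x‖ ≤ m / 16 + m / 16 := by
      rw [sigman_eq]
      exact le_trans (norm_add_le _ _) (add_le_add hsum (hE x))
    have hge : m / 2 ≤ ‖sigman F n A lam eps x‖ := hx
    linarith
  have huni : ∀ k l : Fin K, k ≠ l → ∀ x : ℝ,
      tnorm (x - lam k) < C / n → tnorm (x - lam l) < C / n → False := by
    intro k l hkl x h1 h2
    haveI : Nonempty {p : Fin K × Fin K // p.1 ≠ p.2} := ⟨⟨(k, l), hkl⟩⟩
    obtain ⟨p0, hp0⟩ := Finite.exists_min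
      fun p : {p : Fin K × Fin K // p.1 ≠ p.2} => tnorm (lam p.1.1 - lam p.1.2)
    have hη0 : 0 < η := by
      rw [hη]
      have h0 : 0 < tnorm (lam p0.1.1 - lam p0.1.2) :=
        lt_of_le_of_ne (tnorm_nonneg' _) (Ne.symm (hsep _ _ p0.2))
      exact lt_of_lt_of_le h0 (le_ciInf hp0)
    have hηle : η ≤ tnorm (lam k - lam l) := by
      rw [hη]
      exact ciInf_le (Set.Finite.bddBelow (Set.finite_range _))
        (⟨(k, l), hkl⟩ : {p : Fin K × Fin K // p.1 ≠ p.2})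
    have htri : tnorm (lam k - lam l) ≤ tnorm (x - lam k) + tnorm (x - lam l) := by
      calc tnorm (lam k - lam l) ≤ tnorm (lam k - x) + tnorm (lam l - x) := tnorm_tri' _ _ _
        _ = tnorm (x - lam k) + tnorm (x - lam l) := by rw [tnorm_comm', tnorm_comm' (lam l)]
    have h4C : 4 * C ≤ (n:ℝ) * η := by
      rw [div_le_iff₀ hη0] at hn4
      linarith
    have hCn : C / n ≤ η / 4 := by
      rw [div_le_div_iff₀ hn0 (by norm_num : (0:ℝ) < 4)]
      nlinarith
    linarith
  refine ⟨?_, ?_, ?_⟩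
  · intro x hx
    obtain ⟨l, hl⟩ := hex x hx
    exact ⟨l, hl, fun l' hl' => by_contra fun hne => huni l' l hne x hl' hl⟩
  · ext x
    simp only [Set.mem_iUnion]
    constructor
    · intro hx
      obtain ⟨l, hl⟩ := hex x hx
      exact ⟨l, hx, hl⟩
    · rintro ⟨l, hx, -⟩
      exact hx
  · intro l k hlk
    rw [Set.disjoint_left]
    rintro x ⟨-, hxl⟩ ⟨-, hxk⟩
    exact huni l k hlk x hxl hxk

end
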